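/- arXiv:2110.15936 — 4 statements merged into one kernel-verified Lean document; each statement's English description precedes it below -/
import Mathlib

section
/- Let $\mathscr{S}$ be a $\frac{1}{\tau}$-sparse family of sets, let $1 < p < \infty$, and let $\Psi$ be a Young function such that the associated Orlicz maximal operator $M_\Psi f := \sup_{Q \in \mathscr{S}} \langle |f| \rangle_{\Psi,Q} \mathbf{1}_Q$ is bounded on $L^p$ with norm $N$. Then for any weight $w$ and any $G \in \mathscr{S}$, $\sum_{Q \in \mathscr{S},\, Q \subseteq G} \langle w^{1/p} \rangle_{\Psi,Q}^p\, |Q| \le \tau N^p\, w(G)$. -/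
open MeasureTheory ENNReal Set Filter

/-- A Young function: continuous, convex, strictly increasing (on the finite part),
vanishing at `0`, and superlinear at infinity. -/
def IsYoung (Φ : ℝ≥0∞ → ℝ≥0∞) : Prop :=
  Φ 0 = 0 ∧ Continuous Φ ∧ StrictMonoOn Φ {t : ℝ≥0∞ | t < ∞} ∧
  (∀ a b t : ℝ≥0∞, t ≤ 1 → Φ (t * a + (1 - t) * b) ≤ t * Φ a + (1 - t) * Φ b) ∧
  Tendsto (fun t => Φ t / t) atTop atTop

/-- The Luxembourg (Orlicz) average of `f` over `Q`. -/
noncomputable def luxAvg {X : Type*} [MeasurableSpace X] (μ : Measure X) (Q : Set X)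
    (Φ : ℝ≥0∞ → ℝ≥0∞) (f : X → ℝ≥0∞) : ℝ≥0∞ :=
  sInf {lam : ℝ≥0∞ | 0 < lam ∧ (∫⁻ x in Q, Φ (f x / lam) ∂μ) / μ Q ≤ 1}

/-- The Orlicz maximal operator associated to the family `S`. -/
noncomputable def orliczMax {X ι : Type*} [MeasurableSpace X] (μ : Measure X)
    (S : ι → Set X) (Φ : ℝ≥0∞ → ℝ≥0∞) (f : X → ℝ≥0∞) (x : X) : ℝ≥0∞ :=
  ⨆ i, Set.indicator (S i) (fun _ => luxAvg μ (S i) Φ f) x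

/- For `Q ⊆ G`, the Orlicz average of `w^{1/p}` over `Q` is that of `g := 𝟙_G w^{1/p}`, which is
bounded by `M_Ψ g` on the whole of `Q`, in particular on `E_Q`. Sparseness and the disjointness of
the `E_Q` then bound the sum by `τ ‖M_Ψ g‖_p^p ≤ τ N^p ‖g‖_p^p = τ N^p w(G)`. -/

theorem ENNReal.le_rpow_mul_of_rpow_one_div_le {a b N : ℝ≥0∞} {p : ℝ} (hp : 0 < p)
    (h : a ^ (1 / p) ≤ N * b ^ (1 / p)) : a ≤ N ^ p * b := by
  rwa [one_div, ENNReal.rpow_inv_le_iff hp, ENNReal.mul_rpow_of_nonneg _ _ hp.le,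
    ENNReal.rpow_inv_rpow hp.ne'] at h

section Orlicz

variable {X : Type*} [MeasurableSpace X] {μ : Measure X}

theorem luxAvg_congr {Q : Set X} (hQ : MeasurableSet Q) (Φ : ℝ≥0∞ → ℝ≥0∞) {f g : X → ℝ≥0∞}
    (hfg : EqOn f g Q) : luxAvg μ Q Φ f = luxAvg μ Q Φ g := by
  have hint : ∀ lam, ∫⁻ x in Q, Φ (f x / lam) ∂μ = ∫⁻ x in Q, Φ (g x / lam) ∂μ := fun lam =>
    setLIntegral_congr_fun hQ fun x hx => by rw [hfg hx]
  simp only [luxAvg, hint]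

theorem luxAvg_le_orliczMax {ι : Type*} (S : ι → Set X) (Φ : ℝ≥0∞ → ℝ≥0∞) (f : X → ℝ≥0∞)
    {i : ι} {x : X} (hx : x ∈ S i) : luxAvg μ (S i) Φ f ≤ orliczMax μ S Φ f x := by
  have h := le_iSup (fun j => (S j).indicator (fun _ => luxAvg μ (S j) Φ f) x) i
  rwa [indicator_of_mem hx] at h

theorem lintegral_indicator_rpow_one_div {G : Set X} (hG : MeasurableSet G) (w : X → ℝ≥0∞)
    {p : ℝ} (hp : 0 < p) :
    ∫⁻ x, G.indicator (fun y => w y ^ (1 / p)) x ^ p ∂μ = ∫⁻ x in G, w x ∂μ := by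
  rw [← lintegral_indicator hG]
  refine lintegral_congr fun x => ?_
  by_cases hx : x ∈ G
  · simp only [indicator_of_mem hx, one_div, ENNReal.rpow_inv_rpow hp.ne']
  · simp only [indicator_of_notMem hx, ENNReal.zero_rpow_of_pos hp]

theorem tsum_mul_measure_le_of_sparse {κ : Type*} [Countable κ] {S E : κ → Set X} {τ : ℝ≥0∞}
    (hEmeas : ∀ i, MeasurableSet (E i)) (hsparse : ∀ i, μ (S i) ≤ τ * μ (E i))
    (hdisj : Pairwise (Function.onFun Disjoint E)) {c : κ → ℝ≥0∞} {h : X → ℝ≥0∞}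
    (hc : ∀ i, ∀ x ∈ E i, c i ≤ h x) :
    ∑' i, c i * μ (S i) ≤ τ * ∫⁻ x, h x ∂μ :=
  calc ∑' i, c i * μ (S i)
      ≤ ∑' i, τ * ∫⁻ x in E i, c i ∂μ := ENNReal.tsum_le_tsum fun i => by
        rw [setLIntegral_const, mul_left_comm]
        exact mul_le_mul_right (hsparse i) (c i)
    _ ≤ ∑' i, τ * ∫⁻ x in E i, h x ∂μ :=
        ENNReal.tsum_le_tsum fun i => mul_le_mul_right (setLIntegral_mono' (hEmeas i) (hc i)) τ
    _ = τ * ∫⁻ x in ⋃ i, E i, h x ∂μ := by rw [ENNReal.tsum_mul_left, lintegral_iUnion hEmeas hdisj]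
    _ ≤ τ * ∫⁻ x, h x ∂μ := mul_le_mul_right (setLIntegral_le_lintegral _ _) τ

end Orlicz

theorem stmt2_general {X ι : Type*} [MeasurableSpace X] [Countable ι] (μ : Measure X)
    (S E : ι → Set X) (τ : ℝ≥0∞)
    (hSmeas : ∀ i, MeasurableSet (S i)) (hEmeas : ∀ i, MeasurableSet (E i))
    (hsub : ∀ i, E i ⊆ S i)
    (hsparse : ∀ i, μ (S i) ≤ τ * μ (E i))
    (hdisj : Pairwise (Function.onFun Disjoint E))
    (p : ℝ) (hp : 1 < p)
    (Ψ : ℝ≥0∞ → ℝ≥0∞)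
    (N : ℝ≥0∞)
    (hbound : ∀ g : X → ℝ≥0∞, Measurable g →
      (∫⁻ x, (orliczMax μ S Ψ g x) ^ p ∂μ) ^ (1 / p) ≤ N * (∫⁻ x, g x ^ p ∂μ) ^ (1 / p))
    (w : X → ℝ≥0∞) (hw : Measurable w) (i₀ : ι) :
    ∑' i : {i // S i ⊆ S i₀},
        (luxAvg μ (S i.1) Ψ (fun x => w x ^ (1 / p))) ^ p * μ (S i.1) ≤
      τ * N ^ p * ∫⁻ x in S i₀, w x ∂μ := by
  have hp0 : 0 < p := zero_lt_one.trans hp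
  set g := (S i₀).indicator fun x => w x ^ (1 / p)
  have hg : Measurable g := (hw.pow_const _).indicator (hSmeas i₀)
  calc ∑' i : {i // S i ⊆ S i₀}, (luxAvg μ (S i.1) Ψ (fun x => w x ^ (1 / p))) ^ p * μ (S i.1)
      = ∑' i : {i // S i ⊆ S i₀}, (luxAvg μ (S i.1) Ψ g) ^ p * μ (S i.1) :=
        tsum_congr fun i => by
          rw [luxAvg_congr (hSmeas i.1) Ψ (g := g) fun x hx => (indicator_of_mem (i.2 hx) _).symm]
    _ ≤ τ * ∫⁻ x, (orliczMax μ S Ψ g x) ^ p ∂μ :=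
        tsum_mul_measure_le_of_sparse (fun i => hEmeas i.1) (fun i => hsparse i.1)
          (hdisj.comp_of_injective (f := Subtype.val) Subtype.val_injective) fun i x hx =>
          ENNReal.rpow_le_rpow (luxAvg_le_orliczMax S Ψ g (hsub i.1 hx)) hp0.le
    _ ≤ τ * (N ^ p * ∫⁻ x, g x ^ p ∂μ) := by
        gcongr
        exact ENNReal.le_rpow_mul_of_rpow_one_div_le hp0 (hbound g hg)
    _ = τ * N ^ p * ∫⁻ x in S i₀, w x ∂μ := by
        rw [lintegral_indicator_rpow_one_div (hSmeas i₀) w hp0, mul_assoc]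

/-- If the Orlicz maximal operator `M_Ψ` is bounded on `L^p` with norm `N`, then for any
weight `w` and any `G` in the sparse family, `∑_{Q ⊆ G} ⟨w^{1/p}⟩_{Ψ,Q}^p |Q| ≤ τ N^p w(G)`. -/
theorem stmt2 {X ι : Type*} [MeasurableSpace X] [Countable ι] (μ : Measure X)
    (S E : ι → Set X) (τ : ℝ≥0∞) (hτ : 1 ≤ τ) (hτ' : τ ≠ ∞)
    (hSmeas : ∀ i, MeasurableSet (S i)) (hEmeas : ∀ i, MeasurableSet (E i))
    (hsub : ∀ i, E i ⊆ S i)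
    (hvol : ∀ i, 0 < μ (S i) ∧ μ (S i) < ∞)
    (hsparse : ∀ i, μ (S i) ≤ τ * μ (E i))
    (hdisj : Pairwise (Function.onFun Disjoint E))
    (p : ℝ) (hp : 1 < p)
    (Ψ : ℝ≥0∞ → ℝ≥0∞) (hΨ : IsYoung Ψ)
    (N : ℝ≥0∞)
    (hbound : ∀ g : X → ℝ≥0∞, Measurable g →
      (∫⁻ x, (orliczMax μ S Ψ g x) ^ p ∂μ) ^ (1 / p) ≤ N * (∫⁻ x, g x ^ p ∂μ) ^ (1 / p))
    (w : X → ℝ≥0∞) (hw : Measurable w) (i₀ : ι) :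
    ∑' i : {i // S i ⊆ S i₀},
        (luxAvg μ (S i.1) Ψ (fun x => w x ^ (1 / p))) ^ p * μ (S i.1) ≤
      τ * N ^ p * ∫⁻ x in S i₀, w x ∂μ :=
  stmt2_general μ S E τ hSmeas hEmeas hsub hsparse hdisj p hp Ψ N hbound w hw i₀
end

section
/- Let $1 < p < \infty$ and let $w$ be a weight with finite dyadic Békollé–Bonamí characteristic $[w]_{B_p} := \sup_{Q \in \mathscr{D}} \langle w \rangle_Q \langle w^{1-p'} \rangle_Q^{p-1} < \infty$, where $\mathscr{D}$ is a dyadic lattice. Assume the sharp Buckley bound $\lVert M \rVert_{L^{p'}(\sigma) \to L^{p'}(\sigma)} \le C_{p,d} [\sigma]_{B_{p'}}^{1/(p'-1)}$ for the dyadic maximal function $M$ and the dual weight $\sigma := w^{1-p'}$. Then the Fujii–Wilson characteristic satisfies $[w]_{B_\infty} := \sup_{Q \in \mathscr{D}} \frac{1}{w(Q)} \int_Q M(w \mathbf{1}_Q) \le C_{p,d}\, [w]_{B_p}$. -/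
/-!
Fix a cube `Q` and write `M = M(w 1_Q)`. Splitting `1 = σ^{1/p'} σ^{-1/p'}` and applying Hölder
gives `∫_Q M ≤ ‖M‖_{L^{p'}(σ)} w(Q)^{1/p}`, since `σ^{-p/p'} = w`. Buckley's bound applied to
`w 1_Q`, whose `L^{p'}(σ)` norm is `w(Q)^{1/p'}` because `w^{p'} σ = w`, together with
`[σ]_{B_{p'}}^{1/(p'-1)} = [w]_{B_p}`, bounds this by `C [w]_{B_p} w(Q)`.
-/

open MeasureTheory ENNReal Set

/-- Average of `f` over `Q`. -/
noncomputable def avg {X : Type*} [MeasurableSpace X] (μ : Measure X) (Q : Set X)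
    (f : X → ℝ≥0∞) : ℝ≥0∞ := (∫⁻ x in Q, f x ∂μ) / μ Q

/-- The dyadic maximal function over the lattice `D`. -/
noncomputable def maxD {X ι : Type*} [MeasurableSpace X] (μ : Measure X)
    (D : ι → Set X) (f : X → ℝ≥0∞) (x : X) : ℝ≥0∞ :=
  ⨆ i, Set.indicator (D i) (fun _ => avg μ (D i) f) x

lemma Real.HolderConjugate.sub_one_mul_sub_one {p q : ℝ} (hpq : p.HolderConjugate q) :
    (p - 1) * (q - 1) = 1 := by
  linear_combination hpq.mul_eq_add

namespace ENNReal

lemma rpow_mul_rpow_one_sub {x : ℝ≥0∞} (hx0 : x ≠ 0) (hxtop : x ≠ ∞) (q : ℝ) :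
    x ^ q * x ^ (1 - q) = x := by
  rw [← rpow_add _ _ hx0 hxtop, add_sub_cancel, rpow_one]

lemma rpow_one_sub_rpow_neg_div {p q : ℝ} (hpq : p.HolderConjugate q) (x : ℝ≥0∞) :
    (x ^ (1 - q)) ^ (-(p / q)) = x := by
  rw [← rpow_mul, hpq.div_conj_eq_sub_one, show (1 - q) * -(p - 1) = (p - 1) * (q - 1) by ring,
    hpq.sub_one_mul_sub_one, rpow_one]

lemma iSup_mul_rpow_rpow_of_mul_eq_one {ι : Type*} (a b : ι → ℝ≥0∞) {r s : ℝ} (hr : 0 < r)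
    (hrs : r * s = 1) : (⨆ i, b i * a i ^ s) ^ r = ⨆ i, a i * b i ^ r := by
  refine ((orderIsoRpow r hr).map_iSup _).trans (iSup_congr fun i => ?_)
  rw [orderIsoRpow_apply, mul_rpow_of_nonneg _ _ hr.le, ← rpow_mul, mul_comm s, hrs, rpow_one,
    mul_comm]

end ENNReal

theorem lintegral_le_weighted_Lp_mul_Lq {X : Type*} [MeasurableSpace X] (ν : Measure X)
    {p q : ℝ} (hpq : p.HolderConjugate q) (g : X → ℝ≥0∞) {u : X → ℝ≥0∞} (hu : Measurable u)
    (hu0 : ∀ x, u x ≠ 0) (hutop : ∀ x, u x ≠ ∞) :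
    ∫⁻ x, g x ∂ν ≤ (∫⁻ x, g x ^ p * u x ∂ν) ^ (1 / p) * (∫⁻ x, u x ^ (-(q / p)) ∂ν) ^ (1 / q) := by
  obtain ⟨g', hg'meas, hg'le, hg'int⟩ := exists_measurable_le_lintegral_eq ν g
  have hsplit : ∀ x, g' x = g' x * u x ^ (1 / p) * u x ^ (-(1 / p)) := fun x => by
    rw [mul_assoc, ← rpow_add _ _ (hu0 x) (hutop x), add_neg_cancel, rpow_zero, mul_one]
  calc ∫⁻ x, g x ∂ν = ∫⁻ x, g' x * u x ^ (1 / p) * u x ^ (-(1 / p)) ∂ν := by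
        rw [hg'int]; exact lintegral_congr hsplit
    _ ≤ (∫⁻ x, (g' x * u x ^ (1 / p)) ^ p ∂ν) ^ (1 / p) *
          (∫⁻ x, (u x ^ (-(1 / p))) ^ q ∂ν) ^ (1 / q) :=
        lintegral_mul_le_Lp_mul_Lq ν hpq (hg'meas.mul (hu.pow_const _)).aemeasurable
          (hu.pow_const _).aemeasurable
    _ ≤ (∫⁻ x, g x ^ p * u x ∂ν) ^ (1 / p) * (∫⁻ x, u x ^ (-(q / p)) ∂ν) ^ (1 / q) := by
        simp_rw [mul_rpow_of_nonneg _ _ hpq.nonneg, ← rpow_mul, one_div_mul_cancel hpq.ne_zero,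
          rpow_one, neg_mul, one_div_mul_eq_div]
        exact mul_le_mul_left (rpow_le_rpow (lintegral_mono fun x =>
          mul_le_mul_left (rpow_le_rpow (hg'le x) hpq.nonneg) _) hpq.one_div_nonneg) _

theorem lintegral_indicator_rpow_mul_rpow_one_sub {X : Type*} [MeasurableSpace X]
    (ν : Measure X) {s : Set X} (hs : MeasurableSet s) {w : X → ℝ≥0∞} (hw0 : ∀ x, w x ≠ 0)
    (hwtop : ∀ x, w x ≠ ∞) {q : ℝ} (hq : 0 < q) :
    ∫⁻ x, s.indicator w x ^ q * w x ^ (1 - q) ∂ν = ∫⁻ x in s, w x ∂ν := by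
  rw [← lintegral_indicator hs]
  refine lintegral_congr fun x => ?_
  by_cases hx : x ∈ s
  · rw [indicator_of_mem hx, rpow_mul_rpow_one_sub (hw0 x) (hwtop x)]
  · rw [indicator_of_notMem hx, zero_rpow_of_pos hq, zero_mul]

theorem stmt6_general {X ι : Type*} [MeasurableSpace X] (μ : Measure X)
    (D : ι → Set X) (hDmeas : ∀ i, MeasurableSet (D i))
    (p : ℝ) (hp : 1 < p)
    (w : X → ℝ≥0∞) (hw : Measurable w) (hwpos : ∀ x, 0 < w x) (hwfin : ∀ x, w x < ∞)
    (σ : X → ℝ≥0∞) (hσ : σ = fun x => w x ^ (1 - p / (p - 1)))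
    (Bp : ℝ≥0∞)
    (hBpdef : Bp = ⨆ i, avg μ (D i) w * (avg μ (D i) σ) ^ (p - 1))
    (Bσ : ℝ≥0∞)
    (hBσdef : Bσ = ⨆ i, avg μ (D i) σ * (avg μ (D i) w) ^ (p / (p - 1) - 1))
    (C : ℝ≥0∞)
    (hBuckley : ∀ f : X → ℝ≥0∞, Measurable f →
      (∫⁻ x, (maxD μ D f x) ^ (p / (p - 1)) * σ x ∂μ) ^ (1 / (p / (p - 1))) ≤
        C * Bσ ^ (1 / (p / (p - 1) - 1)) *
          (∫⁻ x, f x ^ (p / (p - 1)) * σ x ∂μ) ^ (1 / (p / (p - 1)))) :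
    (⨆ i, (∫⁻ x in D i, maxD μ D (Set.indicator (D i) w) x ∂μ) /
        ∫⁻ x in D i, w x ∂μ) ≤ C * Bp := by
  have hpq : p.HolderConjugate (p / (p - 1)) := .conjExponent hp
  generalize p / (p - 1) = q at *
  have hσ0 : ∀ x, σ x ≠ 0 := fun x => hσ ▸ (rpow_pos (hwpos x) (hwfin x).ne).ne'
  have hσtop : ∀ x, σ x ≠ ∞ := fun x => hσ ▸ rpow_ne_top_of_ne_zero (hwpos x).ne' (hwfin x).ne
  have hσw : ∀ x, σ x ^ (-(p / q)) = w x := fun x => hσ ▸ rpow_one_sub_rpow_neg_div hpq (w x)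
  have hBσ : Bσ ^ (1 / (q - 1)) = Bp := by
    rw [← eq_one_div_of_mul_eq_one_right hpq.symm.sub_one_mul_sub_one, hBσdef, hBpdef]
    exact iSup_mul_rpow_rpow_of_mul_eq_one _ _ hpq.sub_one_pos hpq.sub_one_mul_sub_one
  refine iSup_le fun i => ENNReal.div_le_of_le_mul ?_
  have hW : ∫⁻ x, (D i).indicator w x ^ q * σ x ∂μ = ∫⁻ x in D i, w x ∂μ := hσ ▸
    lintegral_indicator_rpow_mul_rpow_one_sub μ (hDmeas i) (fun x => (hwpos x).ne')
      (fun x => (hwfin x).ne) hpq.symm.pos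
  set W := ∫⁻ x in D i, w x ∂μ
  calc ∫⁻ x in D i, maxD μ D ((D i).indicator w) x ∂μ
      ≤ (∫⁻ x in D i, maxD μ D ((D i).indicator w) x ^ q * σ x ∂μ) ^ (1 / q) *
          (∫⁻ x in D i, σ x ^ (-(p / q)) ∂μ) ^ (1 / p) :=
        lintegral_le_weighted_Lp_mul_Lq _ hpq.symm _ (hσ ▸ hw.pow_const _) hσ0 hσtop
    _ ≤ (∫⁻ x, maxD μ D ((D i).indicator w) x ^ q * σ x ∂μ) ^ (1 / q) * W ^ (1 / p) := by
        simp_rw [hσw]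
        exact mul_le_mul_left (rpow_le_rpow (setLIntegral_le_lintegral _ _)
          hpq.symm.one_div_nonneg) _
    _ ≤ C * Bσ ^ (1 / (q - 1)) * W ^ (1 / q) * W ^ (1 / p) :=
        mul_le_mul_left (hW ▸ hBuckley _ (hw.indicator (hDmeas i))) _
    _ = C * Bp * W := by
        rw [hBσ, mul_assoc, ← rpow_add_of_nonneg _ _ hpq.symm.one_div_nonneg hpq.one_div_nonneg,
          hpq.symm.one_div_add_one_div, div_one, rpow_one]

/-- `[w]_{B_∞} ≤ C_{p,d} [w]_{B_p}`, given Buckley's sharp bound for the dyadic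
maximal function with respect to the dual weight `σ = w^{1-p'}`. -/
theorem stmt6 {X ι : Type*} [MeasurableSpace X] (μ : Measure X)
    (D : ι → Set X) (hDmeas : ∀ i, MeasurableSet (D i))
    (hdyadic : ∀ i j, D i ⊆ D j ∨ D j ⊆ D i ∨ Disjoint (D i) (D j))
    (hvol : ∀ i, 0 < μ (D i) ∧ μ (D i) < ∞)
    (p : ℝ) (hp : 1 < p)
    (w : X → ℝ≥0∞) (hw : Measurable w) (hwpos : ∀ x, 0 < w x) (hwfin : ∀ x, w x < ∞)
    (σ : X → ℝ≥0∞) (hσ : σ = fun x => w x ^ (1 - p / (p - 1)))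
    (Bp : ℝ≥0∞)
    (hBpdef : Bp = ⨆ i, avg μ (D i) w * (avg μ (D i) σ) ^ (p - 1))
    (hBpfin : Bp ≠ ∞)
    (Bσ : ℝ≥0∞)
    (hBσdef : Bσ = ⨆ i, avg μ (D i) σ * (avg μ (D i) w) ^ (p / (p - 1) - 1))
    (C : ℝ≥0∞) (hC : C ≠ ∞)
    (hBuckley : ∀ f : X → ℝ≥0∞, Measurable f →
      (∫⁻ x, (maxD μ D f x) ^ (p / (p - 1)) * σ x ∂μ) ^ (1 / (p / (p - 1))) ≤
        C * Bσ ^ (1 / (p / (p - 1) - 1)) *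
          (∫⁻ x, f x ^ (p / (p - 1)) * σ x ∂μ) ^ (1 / (p / (p - 1)))) :
    (⨆ i, (∫⁻ x in D i, maxD μ D (Set.indicator (D i) w) x ∂μ) /
        ∫⁻ x in D i, w x ∂μ) ≤ C * Bp :=
  stmt6_general μ D hDmeas p hp w hw hwpos hwfin σ hσ Bp hBpdef Bσ hBσdef C hBuckley
end

section
/- Let $\mathscr{S}$ be a countable $\frac{1}{\tau}$-sparse family of dyadic cubes, and let $w, \sigma$ be weights with joint characteristic $[\sigma, w]_{B_2} := \sup_{Q \in \mathscr{S}} \langle \sigma \rangle_Q \langle w \rangle_Q < \infty$ and Fujii–Wilson characteristic $[\sigma]_{B_\infty} := \sup_{Q \in \mathscr{S}} \frac{1}{\sigma(Q)}\int_Q M(\sigma \mathbf{1}_Q) < \infty$, where $M f := \sup_{Q \in \mathscr{S}} \langle |f| \rangle_Q \mathbf{1}_Q$. Then for every $Q_0 \in \mathscr{S}$, the sparse operator $\Lambda_{\mathscr{S}} f := \sum_{Q \in \mathscr{S}} \langle f \rangle_Q \mathbf{1}_Q$ satisfies the testing estimate $\lVert \mathbf{1}_{Q_0} \Lambda_{\mathscr{S}}(\sigma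 \mathbf{1}_{Q_0}) \rVert_{L^2(w)}^2 \le C_\tau\, [\sigma, w]_{B_2}\, [\sigma]_{B_\infty}\, \sigma(Q_0)$ with $C_\tau$ depending only on $\tau$. -/
open MeasureTheory ENNReal Set

/-- The maximal operator over the family `S`. -/
noncomputable def maxS {X ι : Type*} [MeasurableSpace X] (μ : Measure X)
    (S : ι → Set X) (f : X → ℝ≥0∞) (x : X) : ℝ≥0∞ :=
  ⨆ i, Set.indicator (S i) (fun _ => avg μ (S i) f) x

/-- The sparse operator associated to the family `S`. -/
noncomputable def sparseOp {X ι : Type*} [MeasurableSpace X] (μ : Measure X)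
    (S : ι → Set X) (f : X → ℝ≥0∞) (x : X) : ℝ≥0∞ :=
  ∑' i, Set.indicator (S i) (fun _ => avg μ (S i) f) x

/-!
Split `Λ(σ 1_{Q₀})` on `Q₀` according to whether a cube lies inside `Q₀` or not. A cube that
meets `Q₀` without lying inside it contains `Q₀`; these cubes form a chain in which sparseness
forces the measures to grow geometrically, so together they contribute a constant
`≤ τ² σ(Q₀) / |Q₀|`, whose square integrates to `τ⁴ ⟨σ⟩_{Q₀} ⟨w⟩_{Q₀} σ(Q₀)`.

For the cubes inside `Q₀`, laminarity gives `(∑ a_Q 1_Q)² ≤ 2 ∑_Q a_Q ∑_{Q' ⊆ Q} a_{Q'} 1_{Q'}`.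
Integrating against `w`, `⟨σ⟩_{Q'} w(Q') ≤ [σ,w]_{B₂} τ |E_{Q'}|` and the disjointness of the
`E_{Q'}` bound this by `2τ [σ,w]_{B₂} ∑_{Q ⊆ Q₀} σ(Q)`, and `σ(Q) ≤ τ ∫_{E_Q} M(σ 1_{Q₀})` turns
the last sum into `τ ∫_{Q₀} M(σ 1_{Q₀}) ≤ τ [σ]_{B∞} σ(Q₀)`.
-/

open Function

lemma ENNReal.add_sq_le (a b : ℝ≥0∞) : (a + b) ^ 2 ≤ 2 * (a ^ 2 + b ^ 2) := by
  have h := ENNReal.rpow_add_le_mul_rpow_add_rpow a b (p := 2) one_le_two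
  norm_num at h
  simpa using h

lemma ENNReal.tsum_sq_le_two_mul {ι : Type*} (c : ι → ℝ≥0∞) (r : ι → ι → Prop)
    (hr : ∀ i j, c i ≠ 0 → c j ≠ 0 → r i j ∨ r j i) :
    (∑' i, c i) ^ 2 ≤ 2 * ∑' i, c i * ∑' j : {j | r j i}, c j := by
  have key : ∀ i j, c i * c j ≤
      c i * {j | r j i}.indicator c j + c j * {i | r i j}.indicator c i := by
    intro i j
    by_cases hi : c i = 0
    · simp [hi]
    by_cases hj : c j = 0
    · simp [hj]
    rcases hr i j hi hj with h | h
    · rw [indicator_of_mem (show i ∈ {i | r i j} from h), mul_comm (c j)]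
      exact le_add_self
    · rw [indicator_of_mem (show j ∈ {j | r j i} from h)]
      exact le_self_add
  calc (∑' i, c i) ^ 2 = ∑' i, ∑' j, c i * c j := by
        simp_rw [sq, ENNReal.tsum_mul_left, ENNReal.tsum_mul_right]
    _ ≤ ∑' i, ∑' j, (c i * {j | r j i}.indicator c j + c j * {i | r i j}.indicator c i) :=
        ENNReal.tsum_le_tsum fun i => ENNReal.tsum_le_tsum fun j => key i j
    _ = 2 * ∑' i, c i * ∑' j : {j | r j i}, c j := by
        simp_rw [ENNReal.tsum_add]
        rw [ENNReal.tsum_comm (f := fun i j => c j * _)]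
        simp_rw [ENNReal.tsum_mul_left, two_mul, tsum_subtype]

section

variable {X ι κ : Type*}

def IsLaminar (S : ι → Set X) : Prop :=
  ∀ i j, S i ⊆ S j ∨ S j ⊆ S i ∨ Disjoint (S i) (S j)

lemma IsLaminar.comp {S : ι → Set X} (hS : IsLaminar S) (g : κ → ι) : IsLaminar (S ∘ g) :=
  fun i j => hS (g i) (g j)

lemma IsLaminar.subset_or_subset {S : ι → Set X} (hS : IsLaminar S) {i j : ι} {x : X}
    (hi : x ∈ S i) (hj : x ∈ S j) : S i ⊆ S j ∨ S j ⊆ S i :=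
  (hS i j).imp_right fun h => h.resolve_right fun hd => disjoint_left.1 hd hi hj

end

section

variable {X ι κ : Type*} [MeasurableSpace X] {μ : Measure X}

structure IsSparseFamily (μ : Measure X) (τ : ℝ≥0∞) (S E : ι → Set X) : Prop where
  measurableSet (i : ι) : MeasurableSet (S i)
  measurableSet_core (i : ι) : MeasurableSet (E i)
  core_subset (i : ι) : E i ⊆ S i
  measure_ne_zero (i : ι) : μ (S i) ≠ 0
  measure_ne_top (i : ι) : μ (S i) ≠ ∞
  measure_le (i : ι) : μ (S i) ≤ τ * μ (E i)
  pairwise_disjoint_core : Pairwise (Disjoint on E)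

variable {τ : ℝ≥0∞} {S E : ι → Set X}

lemma IsSparseFamily.comp (hS : IsSparseFamily μ τ S E) {g : κ → ι} (hg : Injective g) :
    IsSparseFamily μ τ (S ∘ g) (E ∘ g) where
  measurableSet i := hS.measurableSet (g i)
  measurableSet_core i := hS.measurableSet_core (g i)
  core_subset i := hS.core_subset (g i)
  measure_ne_zero i := hS.measure_ne_zero (g i)
  measure_ne_top i := hS.measure_ne_top (g i)
  measure_le i := hS.measure_le (g i)
  pairwise_disjoint_core _ _ hij := hS.pairwise_disjoint_core (hg.ne hij)

lemma avg_mul_measure {Q : Set X} (h₀ : μ Q ≠ 0) (h : μ Q ≠ ∞) (f : X → ℝ≥0∞) :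
    avg μ Q f * μ Q = ∫⁻ x in Q, f x ∂μ :=
  ENNReal.div_mul_cancel h₀ h

lemma avg_indicator_le (Q : Set X) {s : Set X} (hs : MeasurableSet s) (f : X → ℝ≥0∞) :
    avg μ Q (s.indicator f) ≤ (∫⁻ x in s, f x ∂μ) / μ Q := by
  rw [avg]
  gcongr ?_ / _
  exact (setLIntegral_le_lintegral Q _).trans (lintegral_indicator hs f).le

lemma avg_indicator_of_subset {Q s : Set X} (hs : MeasurableSet s) (hQ : Q ⊆ s)
    (f : X → ℝ≥0∞) : avg μ Q (s.indicator f) = avg μ Q f := by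
  rw [avg, avg, setLIntegral_indicator hs, inter_eq_right.2 hQ]

lemma avg_le_maxS {i : ι} {x : X} (hx : x ∈ S i) (f : X → ℝ≥0∞) :
    avg μ (S i) f ≤ maxS μ S f x :=
  le_iSup_of_le i (by rw [indicator_of_mem hx])

lemma measurable_sparseOp [Countable ι] (hS : ∀ i, MeasurableSet (S i)) (f : X → ℝ≥0∞) :
    Measurable (sparseOp μ S f) :=
  .tsum fun i => measurable_const.indicator (hS i)

lemma maxS_comp_le (g : κ → ι) (f : X → ℝ≥0∞) (x : X) :
    maxS μ (S ∘ g) f x ≤ maxS μ S f x :=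
  iSup_comp_le (fun i => (S i).indicator (fun _ => avg μ (S i) f) x) g

lemma IsLaminar.sparseOp_sq_le (hS : IsLaminar S) (f : X → ℝ≥0∞) (x : X) :
    sparseOp μ S f x ^ 2 ≤ 2 * ∑' i, avg μ (S i) f *
      ∑' j : {j | S j ⊆ S i}, (S j).indicator (fun _ => avg μ (S j) f) x := by
  refine (ENNReal.tsum_sq_le_two_mul _ (fun i j => S i ⊆ S j) fun i j hi hj =>
    hS.subset_or_subset (mem_of_indicator_ne_zero hi) (mem_of_indicator_ne_zero hj)).trans ?_
  gcongr with i
  exact indicator_apply_le' (fun _ => le_rfl) fun _ => zero_le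

lemma IsLaminar.sparseOp_indicator_le (hlam : IsLaminar S) {i₀ : ι} (hQ : MeasurableSet (S i₀))
    (σ : X → ℝ≥0∞) {x : X} (hx : x ∈ S i₀) :
    sparseOp μ S ((S i₀).indicator σ) x ≤
      sparseOp μ (fun i : {i | S i ⊆ S i₀} => S i) ((S i₀).indicator σ) x +
        (∫⁻ y in S i₀, σ y ∂μ) * ∑' i : {i | S i₀ ⊆ S i ∧ ¬ S i ⊆ S i₀}, (μ (S i))⁻¹ := by
  set A : Set ι := {i | S i ⊆ S i₀}
  set J : Set ι := {i | S i₀ ⊆ S i ∧ ¬ S i ⊆ S i₀}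
  set c : ι → ℝ≥0∞ := fun i => (S i).indicator (fun _ => avg μ (S i) ((S i₀).indicator σ)) x
  have hA : sparseOp μ (fun i : A => S i) ((S i₀).indicator σ) x = ∑' i, A.indicator c i :=
    tsum_subtype A c
  have hJ : ∑' i : J, (μ (S i))⁻¹ = ∑' i, J.indicator (fun i => (μ (S i))⁻¹) i :=
    tsum_subtype J fun i => (μ (S i))⁻¹
  rw [hA, hJ, ← ENNReal.tsum_mul_left, sparseOp, ← ENNReal.tsum_add]
  refine ENNReal.tsum_le_tsum fun i => ?_
  by_cases hi : S i ⊆ S i₀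
  · rw [indicator_of_mem (show i ∈ A from hi)]
    exact le_self_add
  by_cases hxi : x ∈ S i
  · have hsup : S i₀ ⊆ S i := (hlam.subset_or_subset hxi hx).resolve_left hi
    rw [indicator_of_mem hxi, indicator_of_mem (show i ∈ J from ⟨hsup, hi⟩),
      ← div_eq_mul_inv]
    exact le_add_left (avg_indicator_le _ hQ σ)
  · rw [indicator_of_notMem hxi]
    exact zero_le

namespace IsSparseFamily

lemma setLIntegral_le_setLIntegral_maxS (hS : IsSparseFamily μ τ S E) (i : ι)
    (f : X → ℝ≥0∞) : ∫⁻ x in S i, f x ∂μ ≤ ∫⁻ x in S i, maxS μ S f x ∂μ := by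
  rw [← avg_mul_measure (hS.measure_ne_zero i) (hS.measure_ne_top i), ← setLIntegral_const]
  exact setLIntegral_mono' (hS.measurableSet i) fun x hx => avg_le_maxS hx f

lemma tsum_setLIntegral_le [Countable ι] (hS : IsSparseFamily μ τ S E) (f : X → ℝ≥0∞) :
    ∑' i, ∫⁻ x in S i, f x ∂μ ≤ τ * ∫⁻ x in ⋃ i, S i, maxS μ S f x ∂μ := by
  calc ∑' i, ∫⁻ x in S i, f x ∂μ
      = ∑' i, avg μ (S i) f * μ (S i) := by
        simp_rw [avg_mul_measure (hS.measure_ne_zero _) (hS.measure_ne_top _)]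
    _ ≤ ∑' i, τ * ∫⁻ _ in E i, avg μ (S i) f ∂μ := by
        refine ENNReal.tsum_le_tsum fun i => ?_
        rw [setLIntegral_const, mul_left_comm]
        gcongr
        exact hS.measure_le i
    _ ≤ τ * ∑' i, ∫⁻ x in E i, maxS μ S f x ∂μ := by
        rw [ENNReal.tsum_mul_left]
        refine mul_le_mul_right (ENNReal.tsum_le_tsum fun i => ?_) τ
        exact setLIntegral_mono' (hS.measurableSet_core i) fun x hx =>
          avg_le_maxS (hS.core_subset i hx) f
    _ = τ * ∫⁻ x in ⋃ i, E i, maxS μ S f x ∂μ := by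
        rw [lintegral_iUnion hS.measurableSet_core hS.pairwise_disjoint_core]
    _ ≤ τ * ∫⁻ x in ⋃ i, S i, maxS μ S f x ∂μ :=
        mul_le_mul_right (lintegral_mono_set (iUnion_mono hS.core_subset)) τ

lemma tsum_measure_core_le (hS : IsSparseFamily μ τ S E) (U : Set X) :
    ∑' j : {j | S j ⊆ U}, μ (E j) ≤ μ U :=
  (tsum_meas_le_meas_iUnion_of_disjoint μ (As := fun j : {j | S j ⊆ U} => E j)
    (fun j => hS.measurableSet_core j)
    fun _ _ hjk => hS.pairwise_disjoint_core (Subtype.val_injective.ne hjk)).trans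
    (measure_mono (iUnion_subset fun j => (hS.core_subset j).trans j.2))

lemma tsum_avg_mul_setLIntegral_le (hS : IsSparseFamily μ τ S E) {f w : X → ℝ≥0∞} {B : ℝ≥0∞}
    (hB : ∀ i, avg μ (S i) f * avg μ (S i) w ≤ B) (U : Set X) :
    ∑' j : {j | S j ⊆ U}, avg μ (S j) f * ∫⁻ x in S j, w x ∂μ ≤ τ * B * μ U :=
  calc ∑' j : {j | S j ⊆ U}, avg μ (S j) f * ∫⁻ x in S j, w x ∂μ
      ≤ ∑' j : {j | S j ⊆ U}, τ * B * μ (E j) := by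
        refine ENNReal.tsum_le_tsum fun j => ?_
        calc avg μ (S j) f * ∫⁻ x in S j, w x ∂μ
            = avg μ (S j) f * avg μ (S j) w * μ (S j) := by
              rw [← avg_mul_measure (hS.measure_ne_zero j) (hS.measure_ne_top j), mul_assoc]
          _ ≤ B * (τ * μ (E j)) := mul_le_mul' (hB j) (hS.measure_le j)
          _ = τ * B * μ (E j) := by ring
    _ ≤ τ * B * μ U := by
        rw [ENNReal.tsum_mul_left]
        exact mul_le_mul_right (hS.tsum_measure_core_le U) _

lemma lintegral_sparseOp_sq_mul_le [Countable ι] (hS : IsSparseFamily μ τ S E)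
    (hlam : IsLaminar S) {f w : X → ℝ≥0∞} (hw : Measurable w) {B : ℝ≥0∞}
    (hB : ∀ i, avg μ (S i) f * avg μ (S i) w ≤ B) :
    ∫⁻ x, sparseOp μ S f x ^ 2 * w x ∂μ ≤ 2 * τ * B * ∑' i, ∫⁻ x in S i, f x ∂μ := by
  set a : ι → ℝ≥0∞ := fun i => avg μ (S i) f
  set g : ι → X → ℝ≥0∞ := fun i x =>
    ∑' j : {j | S j ⊆ S i}, (S j).indicator (fun y => a j * w y) x
  have hgm : ∀ i, Measurable (g i) := fun i =>
    .tsum fun j => (hw.const_mul _).indicator (hS.measurableSet j)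
  calc ∫⁻ x, sparseOp μ S f x ^ 2 * w x ∂μ
      ≤ ∫⁻ x, 2 * ∑' i, a i * g i x ∂μ := by
        refine lintegral_mono fun x => ?_
        calc sparseOp μ S f x ^ 2 * w x
            ≤ (2 * ∑' i, a i * ∑' j : {j | S j ⊆ S i}, (S j).indicator (fun _ => a j) x) *
              w x := by
              gcongr
              exact hlam.sparseOp_sq_le f x
          _ = 2 * ∑' i, a i * g i x := by
              rw [mul_assoc, ← ENNReal.tsum_mul_right]
              refine congrArg _ (tsum_congr fun i => ?_)
              rw [mul_assoc, ← ENNReal.tsum_mul_right]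
              exact congrArg _ (tsum_congr fun j => (indicator_mul_left _ _ _).symm)
    _ = 2 * ∑' i, a i * ∑' j : {j | S j ⊆ S i}, a j * ∫⁻ x in S j, w x ∂μ := by
        rw [lintegral_const_mul _ (.tsum fun i => (hgm i).const_mul _),
          lintegral_tsum fun i => ((hgm i).const_mul _).aemeasurable]
        refine congrArg _ (tsum_congr fun i => ?_)
        rw [lintegral_const_mul _ (hgm i), lintegral_tsum fun j : {j | S j ⊆ S i} =>
          ((hw.const_mul _).indicator (hS.measurableSet j)).aemeasurable]
        refine congrArg _ (tsum_congr fun j => ?_)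
        rw [lintegral_indicator (hS.measurableSet j), lintegral_const_mul _ hw]
    _ ≤ 2 * ∑' i, a i * (τ * B * μ (S i)) := by
        gcongr with i
        exact hS.tsum_avg_mul_setLIntegral_le hB (S i)
    _ = 2 * τ * B * ∑' i, ∫⁻ x in S i, f x ∂μ := by
        simp_rw [← ENNReal.tsum_mul_left]
        refine tsum_congr fun i => ?_
        rw [← avg_mul_measure (hS.measure_ne_zero i) (hS.measure_ne_top i)]
        ring

lemma measure_core_ne_zero (hS : IsSparseFamily μ τ S E) (i : ι) : μ (E i) ≠ 0 :=
  fun h => hS.measure_ne_zero i <| le_antisymm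
    ((hS.measure_le i).trans_eq (by rw [h, mul_zero])) zero_le

lemma inv_measure_core_le (hS : IsSparseFamily μ τ S E) (i : ι) :
    (μ (E i))⁻¹ ≤ τ / μ (S i) := by
  rw [ENNReal.inv_le_iff_le_mul (fun _ => hS.measure_core_ne_zero i)
    fun h => absurd h (ne_top_of_le_ne_top (hS.measure_ne_top i) (measure_mono (hS.core_subset i))),
    ← mul_div_assoc, mul_comm, ← ENNReal.div_self (hS.measure_ne_zero i) (hS.measure_ne_top i)]
  exact ENNReal.div_le_div_right (hS.measure_le i) _

lemma sum_inv_measure_le (hS : IsSparseFamily μ τ S E) (hlam : IsLaminar S) (F : Finset ι)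
    {D : Set X} (hD : ∀ i ∈ F, D ⊆ S i) (hDE : ∀ i ∈ F, Disjoint D (E i)) (hD₀ : μ D ≠ 0) :
    ∑ i ∈ F, (μ (S i))⁻¹ ≤ τ / μ D := by
  classical
  -- Peel off the smallest set `S j`: `D ∪ E j` lies in all the others, and
  -- `μ D ≤ τ μ (E j)` gives `(μ (S j))⁻¹ + τ / (μ D + μ (E j)) ≤ τ / μ D`.
  induction F using Finset.strongInduction generalizing D with | H F ih => ?_
  rcases F.eq_empty_or_nonempty with rfl | hF
  · simp
  obtain ⟨x, hx⟩ := nonempty_of_measure_ne_zero hD₀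
  obtain ⟨j, hjF, hj⟩ : ∃ j ∈ F, ∀ i ∈ F, S j ⊆ S i := by
    obtain ⟨_, hm, hmin⟩ := Finset.exists_minimal (hF.image S)
    obtain ⟨j, hjF, rfl⟩ := Finset.mem_image.1 hm
    refine ⟨j, hjF, fun i hi => ?_⟩
    exact (hlam.subset_or_subset (hD j hjF hx) (hD i hi hx)).elim id
      (hmin (Finset.mem_image_of_mem S hi))
  have hunion : μ (D ∪ E j) = μ D + μ (E j) :=
    measure_union (hDE j hjF) (hS.measurableSet_core j)
  have hsub : μ D + μ (E j) ≤ μ (S j) :=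
    hunion ▸ measure_mono (union_subset (hD j hjF) (hS.core_subset j))
  have hrest : ∑ i ∈ F.erase j, (μ (S i))⁻¹ ≤ τ / (μ D + μ (E j)) := by
    rw [← hunion]
    refine ih _ (Finset.erase_ssubset hjF) (fun i hi => ?_) (fun i hi => ?_)
      fun h => hD₀ (measure_mono_null subset_union_left h)
    · exact union_subset (hD i (Finset.mem_of_mem_erase hi))
        ((hS.core_subset j).trans (hj i (Finset.mem_of_mem_erase hi)))
    · exact (hDE i (Finset.mem_of_mem_erase hi)).union_left
        (hS.pairwise_disjoint_core (Finset.ne_of_mem_erase hi).symm)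
  have hDτ : μ D ≤ τ * μ (E j) := (le_self_add.trans hsub).trans (hS.measure_le j)
  have hD_top : μ D ≠ ∞ :=
    ne_top_of_le_ne_top (hS.measure_ne_top j) (le_self_add.trans hsub)
  calc ∑ i ∈ F, (μ (S i))⁻¹ = (μ (S j))⁻¹ + ∑ i ∈ F.erase j, (μ (S i))⁻¹ :=
        (Finset.add_sum_erase F _ hjF).symm
    _ ≤ (μ D + μ (E j))⁻¹ + τ / (μ D + μ (E j)) := add_le_add (ENNReal.inv_le_inv.2 hsub) hrest
    _ = (1 + τ) / (μ D + μ (E j)) := by rw [← one_div, ENNReal.div_add_div_same]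
    _ ≤ τ / μ D := by
        rw [ENNReal.le_div_iff_mul_le (Or.inl hD₀) (Or.inl hD_top), ← ENNReal.mul_div_right_comm]
        refine ENNReal.div_le_of_le_mul ?_
        calc (1 + τ) * μ D = μ D + τ * μ D := by ring
          _ ≤ τ * μ (E j) + τ * μ D := by gcongr
          _ = τ * (μ D + μ (E j)) := by ring

lemma tsum_inv_measure_le (hS : IsSparseFamily μ τ S E) (hlam : IsLaminar S) {D : Set X}
    (hD : ∀ i, D ⊆ S i) (hDE : ∀ i, Disjoint D (E i)) (hD₀ : μ D ≠ 0) :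
    ∑' i, (μ (S i))⁻¹ ≤ τ / μ D := by
  rw [ENNReal.tsum_eq_iSup_sum]
  exact iSup_le fun F => hS.sum_inv_measure_le hlam F (fun i _ => hD i) (fun i _ => hDE i) hD₀

lemma tsum_inv_measure_supersets_le (hS : IsSparseFamily μ τ S E) (hlam : IsLaminar S) (i₀ : ι) :
    ∑' i : {i | S i₀ ⊆ S i ∧ ¬ S i ⊆ S i₀}, (μ (S i))⁻¹ ≤ τ ^ 2 / μ (S i₀) :=
  calc ∑' i : {i | S i₀ ⊆ S i ∧ ¬ S i ⊆ S i₀}, (μ (S i))⁻¹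
      ≤ τ / μ (E i₀) :=
        (hS.comp Subtype.val_injective).tsum_inv_measure_le (hlam.comp _)
          (fun i => (hS.core_subset i₀).trans i.2.1)
          (fun i => hS.pairwise_disjoint_core fun h => i.2.2 (h ▸ subset_rfl))
          (hS.measure_core_ne_zero i₀)
    _ ≤ τ ^ 2 / μ (S i₀) := by
        rw [div_eq_mul_inv, sq, mul_div_assoc]
        exact mul_le_mul_right (hS.inv_measure_core_le i₀) τ

lemma lintegral_sparseOp_subfamily_sq_mul_le [Countable ι] (hS : IsSparseFamily μ τ S E)
    (hlam : IsLaminar S) {σ w : X → ℝ≥0∞} (hw : Measurable w) {B : ℝ≥0∞}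
    (hB : ∀ i, avg μ (S i) σ * avg μ (S i) w ≤ B) (i₀ : ι) :
    ∫⁻ x, sparseOp μ (fun i : {i | S i ⊆ S i₀} => S i) ((S i₀).indicator σ) x ^ 2 * w x ∂μ ≤
      2 * τ ^ 2 * B * ∫⁻ x in S i₀, maxS μ S ((S i₀).indicator σ) x ∂μ := by
  have hQ : MeasurableSet (S i₀) := hS.measurableSet i₀
  have hsub := hS.comp (Subtype.val_injective (p := (· ∈ {i | S i ⊆ S i₀})))
  calc _ ≤ 2 * τ * B * ∑' i : {i | S i ⊆ S i₀}, ∫⁻ x in S i, (S i₀).indicator σ x ∂μ :=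
        hsub.lintegral_sparseOp_sq_mul_le (hlam.comp _) hw
          fun i => (avg_indicator_of_subset hQ i.2 σ).symm ▸ hB i
    _ ≤ 2 * τ * B * (τ * ∫⁻ x in S i₀, maxS μ S ((S i₀).indicator σ) x ∂μ) := by
        gcongr
        refine (hsub.tsum_setLIntegral_le _).trans (mul_le_mul_right ?_ τ)
        exact (lintegral_mono_set (iUnion_subset fun i : {i | S i ⊆ S i₀} => i.2)).trans
          (setLIntegral_mono' hQ fun x _ => maxS_comp_le _ _ x)
    _ = _ := by ring

lemma setLIntegral_sparseOp_indicator_sq_mul_le [Countable ι]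
    (hS : IsSparseFamily μ τ S E) (hlam : IsLaminar S) {σ w : X → ℝ≥0∞} (hw : Measurable w)
    {B : ℝ≥0∞} (hB : ∀ i, avg μ (S i) σ * avg μ (S i) w ≤ B) (i₀ : ι) :
    ∫⁻ x in S i₀, sparseOp μ S ((S i₀).indicator σ) x ^ 2 * w x ∂μ ≤
      (4 * τ ^ 2 + 2 * τ ^ 4) * B * ∫⁻ x in S i₀, maxS μ S ((S i₀).indicator σ) x ∂μ := by
  set Q := S i₀
  have hQ : MeasurableSet Q := hS.measurableSet i₀
  set σ₀ := Q.indicator σ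
  set T := sparseOp μ (fun i : {i | S i ⊆ Q} => S i) σ₀
  set K := (∫⁻ y in Q, σ y ∂μ) * (τ ^ 2 / μ Q)
  set I := ∫⁻ x in Q, maxS μ S σ₀ x ∂μ
  have hK : K ^ 2 * ∫⁻ x in Q, w x ∂μ ≤ τ ^ 4 * B * I :=
    calc K ^ 2 * ∫⁻ x in Q, w x ∂μ
        = τ ^ 4 * (avg μ Q σ * avg μ Q w) * ∫⁻ x in Q, σ₀ x ∂μ := by
          rw [setLIntegral_indicator hQ, inter_self]
          simp only [K, avg, div_eq_mul_inv]
          ring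
      _ ≤ τ ^ 4 * B * I := by
          gcongr
          · exact hB i₀
          · exact hS.setLIntegral_le_setLIntegral_maxS i₀ σ₀
  have hsplit : ∀ x ∈ Q, sparseOp μ S σ₀ x ≤ T x + K := fun x hx =>
    (hlam.sparseOp_indicator_le hQ σ hx).trans <|
      add_le_add_right (mul_le_mul_right (hS.tsum_inv_measure_supersets_le hlam i₀) _) _
  have hTm : Measurable T :=
    measurable_sparseOp (fun i : {i | S i ⊆ Q} => hS.measurableSet i) σ₀
  calc ∫⁻ x in Q, sparseOp μ S σ₀ x ^ 2 * w x ∂μ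
      ≤ ∫⁻ x in Q, 2 * (T x ^ 2 * w x) + 2 * K ^ 2 * w x ∂μ := by
        refine setLIntegral_mono' hQ fun x hx => ?_
        calc sparseOp μ S σ₀ x ^ 2 * w x ≤ (T x + K) ^ 2 * w x := by gcongr; exact hsplit x hx
          _ ≤ 2 * (T x ^ 2 + K ^ 2) * w x := by gcongr; exact ENNReal.add_sq_le _ _
          _ = 2 * (T x ^ 2 * w x) + 2 * K ^ 2 * w x := by ring
    _ = 2 * (∫⁻ x in Q, T x ^ 2 * w x ∂μ + K ^ 2 * ∫⁻ x in Q, w x ∂μ) := by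
        rw [lintegral_add_left (by fun_prop), lintegral_const_mul _ (by fun_prop),
          lintegral_const_mul _ hw]
        ring
    _ ≤ 2 * (2 * τ ^ 2 * B * I + τ ^ 4 * B * I) := by
        gcongr
        exact (setLIntegral_le_lintegral Q _).trans
          (hS.lintegral_sparseOp_subfamily_sq_mul_le hlam hw hB i₀)
    _ = (4 * τ ^ 2 + 2 * τ ^ 4) * B * I := by ring

end IsSparseFamily

lemma setLIntegral_mul_eq_zero {Q : Set X} {w : X → ℝ≥0∞} (hw : Measurable w)
    (hQ : ∫⁻ x in Q, w x ∂μ = 0) (f : X → ℝ≥0∞) : ∫⁻ x in Q, f x * w x ∂μ = 0 :=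
  lintegral_eq_zero_of_ae_eq_zero <| by
    filter_upwards [(lintegral_eq_zero_iff hw).1 hQ] with x hx
    simp [hx]

lemma setLIntegral_ne_top_of_avg_mul_avg_ne_top {Q : Set X} (h₀ : μ Q ≠ 0) (h : μ Q ≠ ∞)
    {σ w : X → ℝ≥0∞} (hw : ∫⁻ x in Q, w x ∂μ ≠ 0) (hσw : avg μ Q σ * avg μ Q w ≠ ∞) :
    ∫⁻ x in Q, σ x ∂μ ≠ ∞ := by
  have hσ : avg μ Q σ ≠ ∞ := fun hσ =>
    hσw (hσ ▸ ENNReal.top_mul (ENNReal.div_ne_zero.2 ⟨hw, h⟩))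
  rw [← avg_mul_measure h₀ h]
  exact ENNReal.mul_ne_top hσ h

lemma setLIntegral_maxS_indicator_le_mul {i : ι} (hSi : MeasurableSet (S i)) {σ : X → ℝ≥0∞}
    (hσ : ∫⁻ x in S i, σ x ∂μ ≠ ∞) {c : ℝ≥0∞}
    (hc : (∫⁻ x in S i, maxS μ S ((S i).indicator σ) x ∂μ) / ∫⁻ x in S i, σ x ∂μ ≤ c) :
    ∫⁻ x in S i, maxS μ S ((S i).indicator σ) x ∂μ ≤ c * ∫⁻ x in S i, σ x ∂μ := by
  rcases eq_or_ne (∫⁻ x in S i, σ x ∂μ) 0 with h₀ | h₀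
  · have hM : maxS μ S ((S i).indicator σ) = 0 := by
      funext x
      refine iSup_eq_bot.2 fun j => indicator_apply_eq_zero.2 fun _ => nonpos_iff_eq_zero.1 ?_
      exact (avg_indicator_le _ hSi σ).trans_eq (by rw [h₀, ENNReal.zero_div])
    simp [hM]
  · exact (ENNReal.div_le_iff h₀ hσ).1 hc

end

/-- Testing estimate: `‖1_{Q₀} Λ_𝒮(σ 1_{Q₀})‖_{L²(w)}² ≤ C_τ [σ,w]_{B₂} [σ]_{B_∞} σ(Q₀)`,
with `C_τ` depending only on the sparseness constant `τ`. -/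
theorem stmt7 (τ : ℝ≥0∞) (hτ : 1 ≤ τ) (hτ' : τ ≠ ∞) :
    ∃ C : ℝ≥0∞, 0 < C ∧ C ≠ ∞ ∧
    ∀ (X ι : Type) [MeasurableSpace X] [Countable ι],
    ∀ (μ : Measure X) (S E : ι → Set X),
      (∀ i, MeasurableSet (S i)) → (∀ i, MeasurableSet (E i)) →
      (∀ i, E i ⊆ S i) →
      (∀ i, 0 < μ (S i) ∧ μ (S i) < ∞) →
      (∀ i, μ (S i) ≤ τ * μ (E i)) →
      Pairwise (Function.onFun Disjoint E) →
      (∀ i j, S i ⊆ S j ∨ S j ⊆ S i ∨ Disjoint (S i) (S j)) →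
      ∀ (σ w : X → ℝ≥0∞), Measurable σ → Measurable w →
      ∀ B2 Binf : ℝ≥0∞,
        B2 = (⨆ i, avg μ (S i) σ * avg μ (S i) w) → B2 ≠ ∞ →
        Binf = (⨆ i, (∫⁻ x in S i, maxS μ S (Set.indicator (S i) σ) x ∂μ) /
          ∫⁻ x in S i, σ x ∂μ) → Binf ≠ ∞ →
      ∀ i₀ : ι,
        (∫⁻ x in S i₀, (sparseOp μ S (Set.indicator (S i₀) σ) x) ^ 2 * w x ∂μ) ≤
          C * B2 * Binf * ∫⁻ x in S i₀, σ x ∂μ := by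
  have hτ₀ : τ ≠ 0 := (zero_lt_one.trans_le hτ).ne'
  refine ⟨4 * τ ^ 2 + 2 * τ ^ 4, by positivity, by finiteness, ?_⟩
  intro X ι _ _ μ S E hSm hEm hES hμS hSE hE hlam σ w _ hw B2 Binf hB2 hB2_top hBinf _ i₀
  have hS : IsSparseFamily μ τ S E :=
    ⟨hSm, hEm, hES, fun i => (hμS i).1.ne', fun i => (hμS i).2.ne, hSE, hE⟩
  have hB : ∀ i, avg μ (S i) σ * avg μ (S i) w ≤ B2 := fun i =>
    hB2 ▸ le_iSup (fun i => avg μ (S i) σ * avg μ (S i) w) i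
  rcases eq_or_ne (∫⁻ x in S i₀, w x ∂μ) 0 with hw₀ | hw₀
  · exact (setLIntegral_mul_eq_zero hw hw₀ _).trans_le zero_le
  have hσ_top : ∫⁻ x in S i₀, σ x ∂μ ≠ ∞ :=
    setLIntegral_ne_top_of_avg_mul_avg_ne_top (hS.measure_ne_zero i₀) (hS.measure_ne_top i₀) hw₀
      (ne_top_of_le_ne_top hB2_top (hB i₀))
  calc _ ≤ (4 * τ ^ 2 + 2 * τ ^ 4) * B2 *
        ∫⁻ x in S i₀, maxS μ S ((S i₀).indicator σ) x ∂μ :=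
        hS.setLIntegral_sparseOp_indicator_sq_mul_le hlam hw hB i₀
    _ ≤ (4 * τ ^ 2 + 2 * τ ^ 4) * B2 * (Binf * ∫⁻ x in S i₀, σ x ∂μ) := by
        gcongr
        refine setLIntegral_maxS_indicator_le_mul (hSm i₀) hσ_top (hBinf ▸ ?_)
        exact le_iSup (fun i => (∫⁻ x in S i, maxS μ S ((S i).indicator σ) x ∂μ) /
          ∫⁻ x in S i, σ x ∂μ) i₀
    _ = _ := by ring
end

section
/- Let $\sigma$ be a weight on a measure space, $\mathscr{S}$ a countable family of sets of finite positive $\sigma$-measure, and define the weighted maximal operator $M^\sigma f := \sup_{Q \in \mathscr{S}} \big( \sigma(Q)^{-1} \int_Q |f| \sigma \big) \mathbf{1}_Q$, where $\mathscr{S}$ has the dyadic nesting property (any two sets nested or disjoint). Then for $1 < p \le \infty$, $\lVert M^\sigma \rVert_{L^p(\sigma) \to L^p(\sigma)} \le p'$, with constant independent of the weight $\sigma$. -/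
/-! The maximal function satisfies the Doob-type inequality `t σ(M f > t) ≤ ∫_{M f > t} f dσ`: the
level set is the union of the sets `S i` on which the average of `f` exceeds `t`, by nesting every
finite subfamily of them has a disjoint subfamily with the same union, and on each of its members
the inequality is the definition of the average. The layer cake formula, applied to `σ` and to
`f σ`, turns this into `∫ (M f)^p ≤ p' ∫ f (M f)^(p-1)`, and Hölder's inequality gives the `L^p`
bound after dividing by `‖M f‖_p^(p-1)`. The division needs `‖M f‖_p < ∞`, which holds for finite
subfamilies; monotone convergence passes to the whole family. The `L^∞` bound holds pointwise since
every average is at most the essential supremum. -/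

open MeasureTheory ENNReal Set

/-- The weighted dyadic maximal operator over the family `S` with respect to the
measure `m` (playing the role of `σ dx`). -/
noncomputable def maxW {X ι : Type*} [MeasurableSpace X] (m : Measure X)
    (S : ι → Set X) (f : X → ℝ≥0∞) (x : X) : ℝ≥0∞ :=
  ⨆ i, Set.indicator (S i) (fun _ => (∫⁻ y in S i, f y ∂m) / m (S i)) x

theorem ENNReal.iSup_rpow {κ : Sort*} (a : κ → ℝ≥0∞) {p : ℝ} (hp : 0 < p) :
    (⨆ i, a i) ^ p = ⨆ i, a i ^ p :=
  (orderIsoRpow p hp).map_iSup a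

theorem ENNReal.rpow_le_of_le_mul_rpow {A C : ℝ≥0∞} {a b : ℝ} (ha : 0 < a) (hb : 0 ≤ b)
    (hab : a + b = 1) (hA : A ≠ ∞) (h : A ≤ C * A ^ b) : A ^ a ≤ C := by
  rcases eq_or_ne A 0 with rfl | hA0
  · simp [zero_rpow_of_pos ha]
  have hAb0 : A ^ b ≠ 0 := (rpow_pos (pos_iff_ne_zero.mpr hA0) hA).ne'
  have hAbt : A ^ b ≠ ∞ := rpow_ne_top_of_nonneg hb hA
  refine (ENNReal.mul_le_mul_iff_left hAb0 hAbt).mp ?_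
  rwa [← rpow_add _ _ hA0 hA, hab, rpow_one]

theorem ENNReal.le_one_add_rpow (x : ℝ≥0∞) {p : ℝ} (hp : 1 ≤ p) : x ≤ 1 + x ^ p := by
  rcases le_total x 1 with hx | hx
  · exact le_add_right hx
  · exact le_add_left (by simpa using rpow_le_rpow_of_exponent_le hx hp)

theorem lintegral_rpow_eq_ofReal_mul_lintegral_meas_lt {α : Type*} [MeasurableSpace α]
    (μ : Measure α) {g : α → ℝ≥0∞} (hg : AEMeasurable g μ) (hg_fin : ∀ᵐ x ∂μ, g x ≠ ∞)
    {q : ℝ} (hq : 0 < q) :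
    ∫⁻ x, g x ^ q ∂μ = ENNReal.ofReal q *
      ∫⁻ t in Ioi (0 : ℝ), μ {x | ENNReal.ofReal t < g x} * ENNReal.ofReal (t ^ (q - 1)) := by
  have hlhs : ∫⁻ x, g x ^ q ∂μ = ∫⁻ x, ENNReal.ofReal ((g x).toReal ^ q) ∂μ := by
    refine lintegral_congr_ae ?_
    filter_upwards [hg_fin] with x hx
    rw [← ofReal_rpow_of_nonneg toReal_nonneg hq.le, ofReal_toReal hx]
  rw [hlhs, lintegral_rpow_eq_lintegral_meas_lt_mul μ (.of_forall fun _ => toReal_nonneg)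
    hg.ennreal_toReal hq]
  congr 1
  refine setLIntegral_congr_fun measurableSet_Ioi fun t ht => ?_
  congr 1
  refine measure_congr ?_
  filter_upwards [hg_fin] with x hx
  exact propext (ofReal_lt_iff_lt_toReal (le_of_lt ht) hx).symm

section WeakToStrong

variable {α : Type*} [MeasurableSpace α] {μ : Measure α} {f g : α → ℝ≥0∞} {p : ℝ}

theorem lintegral_rpow_le_mul_lintegral_mul_rpow_sub_one (hf : Measurable f) (hg : Measurable g)
    (hg_fin : ∀ᵐ x ∂μ, g x ≠ ∞) (hp : 1 < p)
    (hweak : ∀ t : ℝ≥0∞, t * μ {x | t < g x} ≤ ∫⁻ x in {x | t < g x}, f x ∂μ) :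
    ∫⁻ x, g x ^ p ∂μ ≤ ENNReal.ofReal (p / (p - 1)) * ∫⁻ x, f x * g x ^ (p - 1) ∂μ := by
  have hp1 : 0 < p - 1 := by linarith
  have hν : ∫⁻ x, f x * g x ^ (p - 1) ∂μ = ∫⁻ x, g x ^ (p - 1) ∂(μ.withDensity f) :=
    (lintegral_withDensity_eq_lintegral_mul μ hf (hg.pow_const _)).symm
  rw [hν, lintegral_rpow_eq_ofReal_mul_lintegral_meas_lt μ hg.aemeasurable hg_fin (by linarith),
    lintegral_rpow_eq_ofReal_mul_lintegral_meas_lt _ hg.aemeasurable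
      (withDensity_absolutelyContinuous μ f |>.ae_le hg_fin) hp1,
    ← mul_assoc, ← ofReal_mul (by positivity), div_mul_cancel₀ _ hp1.ne']
  gcongr ENNReal.ofReal p * ?_
  refine setLIntegral_mono' measurableSet_Ioi fun t (ht : 0 < t) => ?_
  calc μ {x | ENNReal.ofReal t < g x} * ENNReal.ofReal (t ^ (p - 1))
      = ENNReal.ofReal t * μ {x | ENNReal.ofReal t < g x} * ENNReal.ofReal (t ^ (p - 1 - 1)) := by
        rw [mul_comm (ENNReal.ofReal t), mul_assoc, ← ofReal_mul ht.le, ← Real.rpow_one_add' ht.le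
          (by linarith)]
        ring_nf
    _ ≤ μ.withDensity f {x | ENNReal.ofReal t < g x} * ENNReal.ofReal (t ^ (p - 1 - 1)) := by
        rw [withDensity_apply f (measurableSet_lt measurable_const hg)]
        gcongr
        exact hweak _

theorem rpow_lintegral_rpow_le_of_mul_meas_lt_le (hf : Measurable f) (hg : Measurable g)
    (hp : 1 < p) (hweak : ∀ t : ℝ≥0∞, t * μ {x | t < g x} ≤ ∫⁻ x in {x | t < g x}, f x ∂μ)
    (hg_int : ∫⁻ x, g x ^ p ∂μ ≠ ∞) :
    (∫⁻ x, g x ^ p ∂μ) ^ (1 / p) ≤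
      ENNReal.ofReal (p / (p - 1)) * (∫⁻ x, f x ^ p ∂μ) ^ (1 / p) := by
  have hp0 : 0 < p := by linarith
  have hconj : p.HolderConjugate (p / (p - 1)) := .conjExponent hp
  have hg_fin : ∀ᵐ x ∂μ, g x ≠ ∞ := by
    filter_upwards [ae_lt_top (hg.pow_const p) hg_int] with x hx
    exact fun h => by simp [h, top_rpow_of_pos hp0] at hx
  refine rpow_le_of_le_mul_rpow (b := 1 / (p / (p - 1))) (by positivity) (by positivity)
    (by simpa using hconj.one_div_add_one_div) hg_int ?_
  calc ∫⁻ x, g x ^ p ∂μ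
      ≤ ENNReal.ofReal (p / (p - 1)) * ∫⁻ x, f x * g x ^ (p - 1) ∂μ :=
        lintegral_rpow_le_mul_lintegral_mul_rpow_sub_one hf hg hg_fin hp hweak
    _ ≤ ENNReal.ofReal (p / (p - 1)) * ((∫⁻ x, f x ^ p ∂μ) ^ (1 / p) *
          (∫⁻ x, (g x ^ (p - 1)) ^ (p / (p - 1)) ∂μ) ^ (1 / (p / (p - 1)))) := by
        gcongr
        exact ENNReal.lintegral_mul_le_Lp_mul_Lq μ hconj hf.aemeasurable
          (hg.pow_const _).aemeasurable
    _ = _ := by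
        simp_rw [← rpow_mul, mul_div_cancel₀ p (by linarith : p - 1 ≠ 0), mul_assoc]

end WeakToStrong

theorem exists_subset_pairwiseDisjoint_biUnion_eq_of_nested {ι α : Type*} {s : ι → Set α}
    (hnest : ∀ i j, s i ⊆ s j ∨ s j ⊆ s i ∨ Disjoint (s i) (s j)) (F : Finset ι) :
    ∃ G ⊆ F, (G : Set ι).PairwiseDisjoint s ∧ ⋃ i ∈ G, s i = ⋃ i ∈ F, s i := by
  classical
  induction F using Finset.induction_on with
  | empty => exact ⟨∅, by simp⟩
  | @insert a F _ ih =>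
    obtain ⟨G, hGF, hGd, hGU⟩ := ih
    by_cases hcov : ∃ j ∈ G, s a ⊆ s j
    · obtain ⟨j, hjG, haj⟩ := hcov
      refine ⟨G, hGF.trans (Finset.subset_insert a F), hGd, ?_⟩
      rw [Finset.set_biUnion_insert, ← hGU]
      exact (union_eq_self_of_subset_left (haj.trans (subset_biUnion_of_mem (u := s) hjG))).symm
    push Not at hcov
    -- `a` is maximal among `G ∪ {a}`: keep it and drop the members of `G` it contains
    refine ⟨insert a (G.filter fun j => ¬ s j ⊆ s a),
      Finset.insert_subset_insert a ((Finset.filter_subset _ _).trans hGF), ?_, ?_⟩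
    · rw [Finset.coe_insert]
      refine (hGd.subset fun j hj => (Finset.mem_filter.mp hj).1).insert fun j hj _ => ?_
      rw [Finset.mem_coe, Finset.mem_filter] at hj
      exact ((hnest a j).resolve_left (hcov j hj.1)).resolve_left hj.2
    · rw [Finset.set_biUnion_insert, Finset.set_biUnion_insert, ← hGU]
      refine subset_antisymm (union_subset_union_right _
        (biUnion_subset_biUnion_left (Finset.filter_subset _ _))) ?_
      refine union_subset subset_union_left (iUnion₂_subset fun j hjG => ?_)
      by_cases hja : s j ⊆ s a
      · exact hja.trans subset_union_left
      · exact (subset_biUnion_of_mem (u := s) (by simp [hjG, hja])).trans subset_union_right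

theorem mul_meas_iUnion_le_setLIntegral_of_nested {α ι : Type*} [MeasurableSpace α]
    [Countable ι] {μ : Measure α} {s : ι → Set α} (hs : ∀ i, MeasurableSet (s i))
    (hnest : ∀ i j, s i ⊆ s j ∨ s j ⊆ s i ∨ Disjoint (s i) (s j)) (f : α → ℝ≥0∞) (c : ℝ≥0∞)
    (hc : ∀ i, c * μ (s i) ≤ ∫⁻ x in s i, f x ∂μ) :
    c * μ (⋃ i, s i) ≤ ∫⁻ x in ⋃ i, s i, f x ∂μ := by
  classical
  have hdir : Directed (· ⊆ ·) fun F : Finset ι => ⋃ i ∈ F, s i := fun F G =>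
    ⟨F ∪ G, biUnion_subset_biUnion_left Finset.subset_union_left,
      biUnion_subset_biUnion_left Finset.subset_union_right⟩
  rw [iUnion_eq_iUnion_finset s, hdir.measure_iUnion, mul_iSup, ← iUnion_eq_iUnion_finset s]
  refine iSup_le fun F => ?_
  obtain ⟨G, -, hGd, hGU⟩ := exists_subset_pairwiseDisjoint_biUnion_eq_of_nested hnest F
  calc c * μ (⋃ i ∈ F, s i) = ∑ i ∈ G, c * μ (s i) := by
        rw [← hGU, measure_biUnion_finset hGd fun i _ => hs i, Finset.mul_sum]
    _ ≤ ∑ i ∈ G, ∫⁻ x in s i, f x ∂μ := Finset.sum_le_sum fun i _ => hc i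
    _ = ∫⁻ x in ⋃ i ∈ G, s i, f x ∂μ := (lintegral_biUnion_finset hGd (fun i _ => hs i) f).symm
    _ ≤ ∫⁻ x in ⋃ i, s i, f x ∂μ := lintegral_mono_set (iUnion₂_subset fun i _ => subset_iUnion s i)

section MaximalOperator

variable {X ι : Type*} [MeasurableSpace X] (m : Measure X) (S : ι → Set X) (f : X → ℝ≥0∞)

theorem maxW_eq_iSup_setLAverage (x : X) :
    maxW m S f x = ⨆ (i) (_ : x ∈ S i), ⨍⁻ y in S i, f y ∂m := by
  simp only [maxW, setLAverage_eq]
  exact iSup_congr fun i => by by_cases hx : x ∈ S i <;> simp [hx]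

theorem setOf_lt_maxW (c : ℝ≥0∞) :
    {x | c < maxW m S f x} = ⋃ i : {i // c < ⨍⁻ y in S i, f y ∂m}, S i := by
  ext x
  simp [maxW_eq_iSup_setLAverage, lt_iSup_iff, and_comm]

theorem mul_meas_lt_maxW_le_setLIntegral [Countable ι] (hS : ∀ i, MeasurableSet (S i))
    (hnest : ∀ i j, S i ⊆ S j ∨ S j ⊆ S i ∨ Disjoint (S i) (S j)) (c : ℝ≥0∞) :
    c * m {x | c < maxW m S f x} ≤ ∫⁻ x in {x | c < maxW m S f x}, f x ∂m := by
  rw [setOf_lt_maxW]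
  refine mul_meas_iUnion_le_setLIntegral_of_nested (fun i => hS _) (fun i j => hnest _ _) f c
    fun i => mul_le_of_le_div (setLAverage_eq m f (S i) ▸ i.2.le)

theorem maxW_le_essSup (x : X) : maxW m S f x ≤ essSup f m := by
  rw [maxW_eq_iSup_setLAverage]
  refine iSup₂_le fun i _ => ?_
  rw [setLAverage_eq]
  refine div_le_of_le_mul ?_
  calc ∫⁻ y in S i, f y ∂m ≤ ∫⁻ _ in S i, essSup f m ∂m :=
        lintegral_mono_ae (ae_restrict_of_ae (ae_le_essSup f))
    _ = essSup f m * m (S i) := setLIntegral_const _ _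

end MaximalOperator

section FiniteSubfamilies

variable {X ι : Type*} [MeasurableSpace X] {m : Measure X} {S : ι → Set X} {f : X → ℝ≥0∞}

theorem measurable_maxW [Countable ι] (hS : ∀ i, MeasurableSet (S i)) :
    Measurable (maxW m S f) :=
  .iSup fun i => measurable_const.indicator (hS i)

theorem maxW_comp_le {κ : Type*} (e : κ → ι) (x : X) : maxW m (S ∘ e) f x ≤ maxW m S f x :=
  iSup_le fun k => le_iSup (fun i => (S i).indicator (fun _ => (∫⁻ y in S i, f y ∂m) / m (S i)) x)
    (e k)

theorem maxW_eq_iSup_finset (x : X) :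
    maxW m S f x = ⨆ F : Finset ι, maxW m (fun i : F => S i) f x := by
  simp only [maxW, iSup_subtype]
  exact iSup_eq_iSup_finset _

theorem lintegral_maxW_rpow_eq_iSup_finset [Countable ι] (hS : ∀ i, MeasurableSet (S i)) {p : ℝ}
    (hp : 0 < p) :
    ∫⁻ x, maxW m S f x ^ p ∂m = ⨆ F : Finset ι, ∫⁻ x, maxW m (fun i : F => S i) f x ^ p ∂m := by
  classical
  have hmono {F G : Finset ι} (hFG : F ⊆ G) (x : X) :
      maxW m (fun i : F => S i) f x ^ p ≤ maxW m (fun i : G => S i) f x ^ p :=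
    rpow_le_rpow (maxW_comp_le (S := fun i : G => S i) (fun i : F => ⟨i, hFG i.2⟩) x) hp.le
  simp_rw [fun x => maxW_eq_iSup_finset (m := m) (S := S) (f := f) x, iSup_rpow _ hp]
  exact lintegral_iSup_directed
    (fun F => ((measurable_maxW (S := fun i : F => S i) fun i => hS i).pow_const p).aemeasurable)
    fun F G => ⟨F ∪ G, hmono Finset.subset_union_left, hmono Finset.subset_union_right⟩

theorem lintegral_maxW_rpow_ne_top [Fintype ι] (hS : ∀ i, MeasurableSet (S i))
    (hvol : ∀ i, 0 < m (S i) ∧ m (S i) < ∞) {p : ℝ} (hp : 1 ≤ p)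
    (hf : ∫⁻ x, f x ^ p ∂m ≠ ∞) :
    ∫⁻ x, maxW m S f x ^ p ∂m ≠ ∞ := by
  have hp0 : 0 < p := by linarith
  have havg (i : ι) : ⨍⁻ y in S i, f y ∂m ≠ ∞ := by
    rw [setLAverage_eq]
    refine div_ne_top (ne_top_of_le_ne_top ?_ (lintegral_mono fun y => le_one_add_rpow (f y) hp))
      (hvol i).1.ne'
    rw [lintegral_add_left measurable_const, setLIntegral_const, one_mul]
    exact add_ne_top.mpr ⟨(hvol i).2.ne,
      ne_top_of_le_ne_top hf (setLIntegral_le_lintegral _ _)⟩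
  have hpt (x : X) :
      maxW m S f x ^ p ≤ ∑ i, (S i).indicator (fun _ => (⨍⁻ y in S i, f y ∂m) ^ p) x := by
    rw [maxW_eq_iSup_setLAverage]
    simp only [iSup_rpow _ hp0]
    refine iSup₂_le fun i hx => ?_
    rw [← indicator_of_mem hx (fun _ => (⨍⁻ y in S i, f y ∂m) ^ p)]
    exact Finset.single_le_sum (fun j _ => zero_le (α := ℝ≥0∞)) (Finset.mem_univ i)
  refine ne_top_of_le_ne_top ?_ (lintegral_mono hpt)
  rw [lintegral_finsetSum _ fun i _ => measurable_const.indicator (hS i)]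
  simp only [lintegral_indicator_const (hS _)]
  exact sum_ne_top.mpr fun i _ => mul_ne_top (rpow_ne_top_of_nonneg hp0.le (havg i)) (hvol i).2.ne

end FiniteSubfamilies

/-- The weighted dyadic maximal function is bounded on `L^p(σ)` with norm at most
`p' = p/(p-1)` for `1 < p < ∞`, and on `L^∞(σ)` with norm `1`, independently of
the weight. -/
theorem stmt16 {X ι : Type*} [MeasurableSpace X] [Countable ι] (m : Measure X)
    (S : ι → Set X) (hSmeas : ∀ i, MeasurableSet (S i))
    (hvol : ∀ i, 0 < m (S i) ∧ m (S i) < ∞)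
    (hnest : ∀ i j, S i ⊆ S j ∨ S j ⊆ S i ∨ Disjoint (S i) (S j))
    (f : X → ℝ≥0∞) (hf : Measurable f) :
    (∀ p : ℝ, 1 < p →
      (∫⁻ x, (maxW m S f x) ^ p ∂m) ^ (1 / p) ≤
        ENNReal.ofReal (p / (p - 1)) * (∫⁻ x, f x ^ p ∂m) ^ (1 / p)) ∧
    essSup (maxW m S f) m ≤ essSup f m := by
  refine ⟨fun p hp => ?_, essSup_le_of_ae_le _ (.of_forall (maxW_le_essSup m S f))⟩
  have hp0 : 0 < p := by linarith
  by_cases hf_int : ∫⁻ x, f x ^ p ∂m = ∞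
  · rw [hf_int, top_rpow_of_pos (by positivity),
      mul_top (ofReal_pos.mpr (div_pos hp0 (by linarith))).ne']
    exact le_top
  rw [lintegral_maxW_rpow_eq_iSup_finset hSmeas hp0, iSup_rpow _ (by positivity)]
  exact iSup_le fun F => rpow_lintegral_rpow_le_of_mul_meas_lt_le hf
    (measurable_maxW fun i => hSmeas i) hp
    (mul_meas_lt_maxW_le_setLIntegral m _ f (fun i => hSmeas i) (fun i j => hnest i j))
    (lintegral_maxW_rpow_ne_top (S := fun i : F => S i) (fun i => hSmeas i) (fun i => hvol i)
      hp.le hf_int)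
end
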